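/- arXiv:2211.06575 — 2 statements merged into one kernel-verified Lean document; each statement's English description precedes it below -/
import Mathlib

section
/- A tableau T ∈ IGLT_m(λ) is a source tableau if and only if for every 1 ≤ i ≤ m−1 that is not a descent of T, the box immediately to the right of Top_i(T) belongs to the Young diagram of λ and contains the entry i+1. -/
open Classical

noncomputable section

namespace Genomic

/-- `lam` encodes a partition of `n`: `lam r` is the length of the `r`-th row (rows are
1-based, indexed from the top). -/
def IsPartitionOf (n : ℕ) (lam : ℕ → ℕ) : Prop :=
  (∀ r, 1 ≤ r → lam (r + 1) ≤ lam r) ∧ (∀ r, n < r → lam r = 0) ∧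
    (∑ r ∈ Finset.Icc 1 n, lam r) = n

/-- `p = (r, c)` is a box of the Young diagram of `lam` (row `r` from the top,
column `c` from the left, both 1-based). -/
def IsCell (lam : ℕ → ℕ) (p : ℕ × ℕ) : Prop :=
  1 ≤ p.1 ∧ 1 ≤ p.2 ∧ p.2 ≤ lam p.1

/-- `T` is an increasing gapless tableau of shape `lam` with maximum entry `m`
(normalized to take the value `0` outside the Young diagram). -/
def IsIGLT (lam : ℕ → ℕ) (m : ℕ) (T : ℕ × ℕ → ℕ) : Prop :=
  (∀ p, ¬ IsCell lam p → T p = 0) ∧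
  (∀ p, IsCell lam p → 1 ≤ T p ∧ T p ≤ m) ∧
  (∀ r c, IsCell lam (r, c) → IsCell lam (r, c + 1) → T (r, c) < T (r, c + 1)) ∧
  (∀ r c, IsCell lam (r, c) → IsCell lam (r + 1, c) → T (r, c) < T (r + 1, c)) ∧
  (∀ k, 1 ≤ k → k ≤ m → ∃ p, IsCell lam p ∧ T p = k)

/-- The set of boxes of `T` containing the entry `i`, i.e. `T⁻¹(i)`. -/
def cellsWith (lam : ℕ → ℕ) (T : ℕ × ℕ → ℕ) (i : ℕ) : Set (ℕ × ℕ) :=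
  {p | IsCell lam p ∧ T p = i}

def rowSet (lam : ℕ → ℕ) (T : ℕ × ℕ → ℕ) (i : ℕ) : Set ℕ :=
  {r | ∃ c, IsCell lam (r, c) ∧ T (r, c) = i}

/-- The row `r_t^{(i)}` of `Top_i(T)`. -/
def rtop (lam : ℕ → ℕ) (T : ℕ × ℕ → ℕ) (i : ℕ) : ℕ := sInf (rowSet lam T i)

/-- The row `r_b^{(i)}` of `Bot_i(T)`. -/
def rbot (lam : ℕ → ℕ) (T : ℕ × ℕ → ℕ) (i : ℕ) : ℕ := sSup (rowSet lam T i)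

/-- The column `c_t^{(i)}` of `Top_i(T)`. -/
def ctop (lam : ℕ → ℕ) (T : ℕ × ℕ → ℕ) (i : ℕ) : ℕ :=
  sInf {c | IsCell lam (rtop lam T i, c) ∧ T (rtop lam T i, c) = i}

/-- The column `c_b^{(i)}` of `Bot_i(T)`. -/
def cbot (lam : ℕ → ℕ) (T : ℕ × ℕ → ℕ) (i : ℕ) : ℕ :=
  sInf {c | IsCell lam (rbot lam T i, c) ∧ T (rbot lam T i, c) = i}

/-- `i` is a descent of `T`. -/
def IsDescent (lam : ℕ → ℕ) (T : ℕ × ℕ → ℕ) (i : ℕ) : Prop :=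
  rtop lam T i < rbot lam T (i + 1)

/-- `i` is an attacking descent of `T`. -/
def IsAttacking (lam : ℕ → ℕ) (T : ℕ × ℕ → ℕ) (i : ℕ) : Prop :=
  IsDescent lam T i ∧
    ((∃ r c, IsCell lam (r, c) ∧ IsCell lam (r + 1, c) ∧ T (r, c) = i ∧ T (r + 1, c) = i + 1) ∨
      (∃ p, IsCell lam p ∧ T p = i + 1 ∧ p.1 ≤ rbot lam T i))

/-- `s_i · T`: exchange the entries `i` and `i+1` of `T`. -/
def swapTab (lam : ℕ → ℕ) (i : ℕ) (T : ℕ × ℕ → ℕ) : ℕ × ℕ → ℕ := fun p =>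
  if IsCell lam p then (if T p = i then i + 1 else if T p = i + 1 then i else T p) else 0

/-- The `0`-Hecke operator `π_i` on the free `ℂ`-module on fillings of the diagram of `lam`. -/
def piOp (lam : ℕ → ℕ) (i : ℕ) :
    ((ℕ × ℕ → ℕ) →₀ ℂ) →ₗ[ℂ] ((ℕ × ℕ → ℕ) →₀ ℂ) :=
  Finsupp.lsum ℂ fun T => LinearMap.toSpanSingleton ℂ ((ℕ × ℕ → ℕ) →₀ ℂ)
    (if ¬ IsDescent lam T i then Finsupp.single T (1 : ℂ)
     else if IsAttacking lam T i then 0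
     else Finsupp.single (swapTab lam i T) (1 : ℂ))

/-- The basis vectors of `ℂ · IGLT_m(λ)` inside the ambient free module. -/
def iglSingles (lam : ℕ → ℕ) (m : ℕ) : Set ((ℕ × ℕ → ℕ) →₀ ℂ) :=
  {f | ∃ T, IsIGLT lam m T ∧ f = Finsupp.single T (1 : ℂ)}

/-! ### Lattice paths `Γ_i(T)` and the equivalence relation `∼` -/

/-- The (extended) entry of the box `p` is `< i`: boxes outside the positive quadrant count
as `-∞`, boxes in the positive quadrant but outside the diagram count as `+∞`. -/
def entryLt (lam : ℕ → ℕ) (T : ℕ × ℕ → ℕ) (i : ℕ) (p : ℕ × ℕ) : Prop :=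
  p.1 = 0 ∨ p.2 = 0 ∨ (IsCell lam p ∧ T p < i)

/-- The (extended) entry of the box `p` is `≥ i`. -/
def entryGe (lam : ℕ → ℕ) (T : ℕ × ℕ → ℕ) (i : ℕ) (p : ℕ × ℕ) : Prop :=
  IsCell lam p → i ≤ T p

/-- One step of the lattice path `Γ_i(T)`: from the lattice point `p = ⟨r,c⟩` either one
step up to `⟨r-1,c⟩` (the left box has entry `< i`, the right box entry `≥ i`) or one step
right to `⟨r,c+1⟩` (the above box has entry `< i`, the below box entry `≥ i`). -/
def gammaStep (lam : ℕ → ℕ) (T : ℕ × ℕ → ℕ) (i : ℕ) (p q : ℕ × ℕ) : Prop :=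
  (1 ≤ p.1 ∧ q = (p.1 - 1, p.2) ∧ entryLt lam T i (p.1, p.2) ∧
      entryGe lam T i (p.1, p.2 + 1)) ∨
  (q = (p.1, p.2 + 1) ∧ entryLt lam T i (p.1, p.2 + 1) ∧
      entryGe lam T i (p.1 + 1, p.2 + 1))

/-- `V` is (the vertex set of) the lattice path `Γ_i(T)`, running from the bottom-left
corner of `Bot_i(T)` to the top-right corner of `Top_i(T)`. -/
def IsGammaPath (lam : ℕ → ℕ) (T : ℕ × ℕ → ℕ) (i : ℕ) (V : Set (ℕ × ℕ)) : Prop :=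
  ∃ P : List (ℕ × ℕ), P ≠ [] ∧
    P.head? = some (rbot lam T i, cbot lam T i - 1) ∧
    P.getLast? = some (rtop lam T i - 1, ctop lam T i) ∧
    List.Chain' (gammaStep lam T i) P ∧ V = {p | p ∈ P}

/-- `i ∈ I(T)`: the entry `i` occupies more than one box of `T`. -/
def hasMultiple (lam : ℕ → ℕ) (T : ℕ × ℕ → ℕ) (i : ℕ) : Prop :=
  ∃ p q, p ≠ q ∧ p ∈ cellsWith lam T i ∧ q ∈ cellsWith lam T i

/-- The set of pairs `(Γ_i(T), T⁻¹(i))` for `i ∈ I(T)`. -/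
def gammaData (lam : ℕ → ℕ) (T : ℕ × ℕ → ℕ) : Set (Set (ℕ × ℕ) × Set (ℕ × ℕ)) :=
  {d | ∃ i, hasMultiple lam T i ∧ IsGammaPath lam T i d.1 ∧ d.2 = cellsWith lam T i}

/-- The equivalence relation `∼` on tableaux. -/
def TabEquiv (lam : ℕ → ℕ) (T₁ T₂ : ℕ × ℕ → ℕ) : Prop :=
  gammaData lam T₁ = gammaData lam T₂

/-! ### Source and sink tableaux -/

def IsSourceTab (lam : ℕ → ℕ) (m : ℕ) (T : ℕ × ℕ → ℕ) : Prop :=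
  IsIGLT lam m T ∧
    ¬ ∃ T' i, IsIGLT lam m T' ∧ T' ≠ T ∧ 1 ≤ i ∧ i ≤ m - 1 ∧
      piOp lam i (Finsupp.single T' (1 : ℂ)) = Finsupp.single T (1 : ℂ)

def IsSinkTab (lam : ℕ → ℕ) (m : ℕ) (T : ℕ × ℕ → ℕ) : Prop :=
  IsIGLT lam m T ∧
    ¬ ∃ T' i, IsIGLT lam m T' ∧ T' ≠ T ∧ 1 ≤ i ∧ i ≤ m - 1 ∧
      piOp lam i (Finsupp.single T (1 : ℂ)) = Finsupp.single T' (1 : ℂ)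

/-! ### Permutations, words, length and the left weak Bruhat order -/

def isWordIn (m : ℕ) (w : List ℕ) : Prop := ∀ j ∈ w, 1 ≤ j ∧ j ≤ m - 1

/-- The product `s_{i_p} ⋯ s_{i_2} s_{i_1}` of the simple transpositions indexed by the
word `w = [i_p, …, i_2, i_1]`. -/
def wordProd (w : List ℕ) : Equiv.Perm ℕ := (w.map fun j => Equiv.swap j (j + 1)).prod

/-- The Coxeter length of `σ` as an element of `S_m`. -/
def permLength (m : ℕ) (σ : Equiv.Perm ℕ) : ℕ :=
  sInf {k | ∃ w, isWordIn m w ∧ wordProd w = σ ∧ w.length = k}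

/-- `w` is a reduced word for `σ ∈ S_m`. -/
def IsReducedWord (m : ℕ) (w : List ℕ) (σ : Equiv.Perm ℕ) : Prop :=
  isWordIn m w ∧ wordProd w = σ ∧ w.length = permLength m σ

/-- `i ∈ Des_L(σ)`, i.e. `ℓ(s_i σ) < ℓ(σ)`. -/
def DesL (m : ℕ) (σ : Equiv.Perm ℕ) (i : ℕ) : Prop :=
  permLength m (Equiv.swap i (i + 1) * σ) < permLength m σ

/-- Covering relation of the left weak Bruhat order: `σ ⋖ s_i σ` for `i ∉ Des_L(σ)`. -/
def weakCovL (m : ℕ) (σ ρ : Equiv.Perm ℕ) : Prop :=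
  ∃ i, 1 ≤ i ∧ i ≤ m - 1 ∧ ¬ DesL m σ i ∧ ρ = Equiv.swap i (i + 1) * σ

/-- The left weak Bruhat order `⪯_L` on `S_m`. -/
def weakLe (m : ℕ) : Equiv.Perm ℕ → Equiv.Perm ℕ → Prop :=
  Relation.ReflTransGen (weakCovL m)

/-- The left weak Bruhat interval `[σ, ρ]_L`. -/
def weakInterval (m : ℕ) (σ ρ : Equiv.Perm ℕ) : Set (Equiv.Perm ℕ) :=
  {γ | weakLe m σ γ ∧ weakLe m γ ρ}

/-- `σ` is a permutation of `{1, …, m}`. -/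
def InSymm (m : ℕ) (σ : Equiv.Perm ℕ) : Prop := ∀ x, σ x ≠ x → 1 ≤ x ∧ x ≤ m

/-- `π_{i_p} ⋯ π_{i_2} π_{i_1} (x)` for the word `w = [i_p, …, i_2, i_1]`. -/
def applyWord (lam : ℕ → ℕ) (w : List ℕ) (x : (ℕ × ℕ → ℕ) →₀ ℂ) : (ℕ × ℕ → ℕ) →₀ ℂ :=
  w.foldr (fun j y => piOp lam j y) x

/-- The partial order `⪯_E`: `T₂ = π_σ (T₁)` for some `σ ∈ S_m`. -/
def precE (lam : ℕ → ℕ) (m : ℕ) (T₁ T₂ : ℕ × ℕ → ℕ) : Prop :=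
  ∃ σ w, IsReducedWord m w σ ∧
    applyWord lam w (Finsupp.single T₁ (1 : ℂ)) = Finsupp.single T₂ (1 : ℂ)

/-! ### Blocks `H_j`, reading words and `sfread` -/

/-- The set of descents of `TE` (inside `[1, m-1]`). -/
def descValsAll (lam : ℕ → ℕ) (m : ℕ) (TE : ℕ × ℕ → ℕ) : Set ℕ :=
  {d | 1 ≤ d ∧ d ≤ m - 1 ∧ IsDescent lam TE d}

/-- `k`, the number of descents of `TE`. -/
def numDesc (lam : ℕ → ℕ) (m : ℕ) (TE : ℕ × ℕ → ℕ) : ℕ := (descValsAll lam m TE).ncard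

/-- The index `j` such that `d_{j-1} < v ≤ d_j`. -/
def blockOf (lam : ℕ → ℕ) (m : ℕ) (TE : ℕ × ℕ → ℕ) (v : ℕ) : ℕ :=
  1 + {d | d ∈ descValsAll lam m TE ∧ d < v}.ncard

/-- The horizontal strip `H_j = TE⁻¹([d_{j-1}+1, d_j])`. -/
def Hset (lam : ℕ → ℕ) (m : ℕ) (TE : ℕ × ℕ → ℕ) (j : ℕ) : Set (ℕ × ℕ) :=
  {p | IsCell lam p ∧ blockOf lam m TE (TE p) = j}

/-- The `(b+1)`-st smallest element of a set of naturals. -/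
def nthInf (S : Set ℕ) : ℕ → ℕ
  | 0 => sInf S
  | b + 1 => nthInf {v | v ∈ S ∧ sInf S < v} b

/-- `d_j`, with `d_0 = 0` and `d_{k+1} = m`. -/
def dval (lam : ℕ → ℕ) (m : ℕ) (TE : ℕ × ℕ → ℕ) (j : ℕ) : ℕ :=
  if j = 0 then 0
  else if numDesc lam m TE < j then m
  else nthInf (descValsAll lam m TE) (j - 1)

/-- The word obtained by reading the entries of `T` on the boxes of `S` from right to
left (i.e. by decreasing column). -/
def stripWord (lam : ℕ → ℕ) (T : ℕ × ℕ → ℕ) (S : Set (ℕ × ℕ)) : List ℕ :=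
  (List.range (lam 1 + 1)).reverse.filterMap fun c =>
    if h : ∃ r, (r, c) ∈ S then some (T (sInf {r | (r, c) ∈ S}, c)) else none

/-- The standardized reading word of `T` (as a list): the concatenation over
`j = 1, …, k+1` of the de-duplicated right-to-left readings of `T` on `H_j`. -/
def sfreadList (lam : ℕ → ℕ) (m : ℕ) (TE T : ℕ × ℕ → ℕ) : List ℕ :=
  ((List.range (numDesc lam m TE + 1)).map fun j0 =>
    (stripWord lam T (Hset lam m TE (j0 + 1))).dedup).flatten

/-- `u` is the one-line notation of `σ ∈ S_m`. -/
def IsOneLineOf (m : ℕ) (u : List ℕ) (σ : Equiv.Perm ℕ) : Prop :=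
  InSymm m σ ∧ u.length = m ∧ ∀ j < m, σ (j + 1) = u.getD j 0

/-- The permutation of `S_m` whose one-line notation is `u` (junk value if none exists). -/
def toPerm (m : ℕ) (u : List ℕ) : Equiv.Perm ℕ :=
  if h : ∃ σ, IsOneLineOf m u σ then h.choose else 1

/-- The standardized reading word `sfread(T) ∈ S_m`. -/
def sfread (lam : ℕ → ℕ) (m : ℕ) (TE T : ℕ × ℕ → ℕ) : Equiv.Perm ℕ :=
  toPerm m (sfreadList lam m TE T)

/-! ### The generalized composition `α_E`, standard ribbon tableaux, and `η` -/

/-- The `j`-th and `(j+1)`-st columns of `rd(α_E)` are connected, i.e.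
`Bot_{d_{j-1}+1}(T_E)` is weakly left of `Top_{d_{j+1}}(T_E)`. -/
def connAt (lam : ℕ → ℕ) (m : ℕ) (TE : ℕ × ℕ → ℕ) (j : ℕ) : Prop :=
  cbot lam TE (dval lam m TE (j - 1) + 1) ≤ ctop lam TE (dval lam m TE (j + 1))

/-- The length `d_j - d_{j-1}` of the `j`-th column of `rd(α_E)`. -/
def colLen (lam : ℕ → ℕ) (m : ℕ) (TE : ℕ × ℕ → ℕ) (j : ℕ) : ℕ :=
  dval lam m TE j - dval lam m TE (j - 1)

/-- The row coordinate (in `ℤ`, increasing downwards) of the top box of the `j`-th column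
of the generalized ribbon diagram `rd(α_E)`. -/
def topRowZ (lam : ℕ → ℕ) (m : ℕ) (TE : ℕ × ℕ → ℕ) : ℕ → ℤ
  | 0 => 0
  | 1 => 0
  | j + 2 =>
      (if connAt lam m TE (j + 1) then topRowZ lam m TE (j + 1)
       else topRowZ lam m TE (j + 1) - 1) - ((colLen lam m TE (j + 2) : ℤ) - 1)

/-- The row coordinate of the `b`-th box from the top of the `j`-th column of `rd(α_E)`. -/
def rowOfBox (lam : ℕ → ℕ) (m : ℕ) (TE : ℕ × ℕ → ℕ) (j b : ℕ) : ℤ :=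
  topRowZ lam m TE j + (b : ℤ) - 1

/-- `(j, b)` is a box of `rd(α_E)`: column `j ∈ [1, k+1]`, box `b ∈ [1, d_j - d_{j-1}]`
from the top. -/
def inRangeBox (lam : ℕ → ℕ) (m : ℕ) (TE : ℕ × ℕ → ℕ) (j b : ℕ) : Prop :=
  1 ≤ j ∧ j ≤ numDesc lam m TE + 1 ∧ 1 ≤ b ∧ b ≤ colLen lam m TE j

/-- `F` is a standard ribbon tableau of shape `α_E` (encoded by column and position from
the top; normalized to `0` outside `rd(α_E)`). -/
def IsSRT (lam : ℕ → ℕ) (m : ℕ) (TE : ℕ × ℕ → ℕ) (F : ℕ → ℕ → ℕ) : Prop :=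
  (∀ j b, ¬ inRangeBox lam m TE j b → F j b = 0) ∧
  (∀ j b, inRangeBox lam m TE j b → 1 ≤ F j b ∧ F j b ≤ m) ∧
  (∀ v, 1 ≤ v → v ≤ m →
    ∃! q : ℕ × ℕ, inRangeBox lam m TE q.1 q.2 ∧ F q.1 q.2 = v) ∧
  (∀ j b, inRangeBox lam m TE j b → inRangeBox lam m TE j (b + 1) → F j b < F j (b + 1)) ∧
  (∀ j, 1 ≤ j → j ≤ numDesc lam m TE → connAt lam m TE j →
    F j 1 < F (j + 1) (colLen lam m TE (j + 1)))

/-- The position (1-based, from the left) of the box `p` within the strip `H_j` counted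
so that it increases by one along each connected component and repeats across breaks. -/
def idxIn (lam : ℕ → ℕ) (m : ℕ) (TE : ℕ × ℕ → ℕ) (j : ℕ) (p : ℕ × ℕ) : ℕ :=
  1 + {q | q ∈ Hset lam m TE j ∧ q.2 < p.2 ∧ (q.1, q.2 + 1) ∈ Hset lam m TE j}.ncard

/-- The filling `T_𝒯` of the Young diagram of `lam` associated to an SRT `F`. -/
def Tfill (lam : ℕ → ℕ) (m : ℕ) (TE : ℕ × ℕ → ℕ) (F : ℕ → ℕ → ℕ) : ℕ × ℕ → ℕ := fun p =>
  if IsCell lam p then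
    F (blockOf lam m TE (TE p)) (idxIn lam m TE (blockOf lam m TE (TE p)) p)
  else 0

/-- The linear map `η : ℂ·SRT(α_E) → ℂ·E`, `𝒯 ↦ T_𝒯` if `T_𝒯 ∈ E` and `𝒯 ↦ 0` otherwise. -/
def etaMap (lam : ℕ → ℕ) (m : ℕ) (TE : ℕ × ℕ → ℕ) :
    ((ℕ → ℕ → ℕ) →₀ ℂ) →ₗ[ℂ] ((ℕ × ℕ → ℕ) →₀ ℂ) :=
  Finsupp.lsum ℂ fun F => LinearMap.toSpanSingleton ℂ ((ℕ × ℕ → ℕ) →₀ ℂ)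
    (if IsSRT lam m TE F ∧ IsIGLT lam m (Tfill lam m TE F) ∧
        TabEquiv lam TE (Tfill lam m TE F)
     then Finsupp.single (Tfill lam m TE F) (1 : ℂ) else 0)

/-- The set of values of `T` on the strip `H_j`. -/
def valSet (lam : ℕ → ℕ) (m : ℕ) (TE T : ℕ × ℕ → ℕ) (j : ℕ) : Set ℕ :=
  {v | ∃ p ∈ Hset lam m TE j, T p = v}

/-- The standard ribbon tableau `𝒯_T` whose `j`-th column consists of the values of `T`
on `H_j`, increasing from top to bottom. -/
def canonSRT (lam : ℕ → ℕ) (m : ℕ) (TE T : ℕ × ℕ → ℕ) : ℕ → ℕ → ℕ := fun j b =>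
  if inRangeBox lam m TE j b then nthInf (valSet lam m TE T j) (b - 1) else 0

/-- `s_i · F`: exchange the entries `i` and `i+1` of a standard ribbon tableau. -/
def swapSRT (i : ℕ) (F : ℕ → ℕ → ℕ) : ℕ → ℕ → ℕ := fun j b =>
  if F j b = i then i + 1 else if F j b = i + 1 then i else F j b

/-- `i` appears strictly above `i+1` in `F`. -/
def aboveIn (lam : ℕ → ℕ) (m : ℕ) (TE : ℕ × ℕ → ℕ) (F : ℕ → ℕ → ℕ) (i : ℕ) : Prop :=
  ∃ j b j' b', inRangeBox lam m TE j b ∧ inRangeBox lam m TE j' b' ∧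
    F j b = i ∧ F j' b' = i + 1 ∧ rowOfBox lam m TE j b < rowOfBox lam m TE j' b'

/-- `i` and `i+1` lie in the same row of `F`. -/
def sameRowIn (lam : ℕ → ℕ) (m : ℕ) (TE : ℕ × ℕ → ℕ) (F : ℕ → ℕ → ℕ) (i : ℕ) : Prop :=
  ∃ j b j' b', inRangeBox lam m TE j b ∧ inRangeBox lam m TE j' b' ∧
    F j b = i ∧ F j' b' = i + 1 ∧ rowOfBox lam m TE j b = rowOfBox lam m TE j' b'

/-- The `0`-Hecke operator `π_i` on `ℂ·SRT(α_E)` (inside the ambient free module). -/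
def piSRT (lam : ℕ → ℕ) (m : ℕ) (TE : ℕ × ℕ → ℕ) (i : ℕ) :
    ((ℕ → ℕ → ℕ) →₀ ℂ) →ₗ[ℂ] ((ℕ → ℕ → ℕ) →₀ ℂ) :=
  Finsupp.lsum ℂ fun F => LinearMap.toSpanSingleton ℂ ((ℕ → ℕ → ℕ) →₀ ℂ)
    (if aboveIn lam m TE F i then Finsupp.single F (1 : ℂ)
     else if sameRowIn lam m TE F i then 0
     else Finsupp.single (swapSRT i F) (1 : ℂ))

/-! ### Weak Bruhat interval modules -/

/-- The `0`-Hecke operator `π_i` of the weak Bruhat interval module `B(σ, ρ)`. -/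
def piB (m : ℕ) (σ ρ : Equiv.Perm ℕ) (i : ℕ) :
    (Equiv.Perm ℕ →₀ ℂ) →ₗ[ℂ] (Equiv.Perm ℕ →₀ ℂ) :=
  Finsupp.lsum ℂ fun γ => LinearMap.toSpanSingleton ℂ (Equiv.Perm ℕ →₀ ℂ)
    (if DesL m γ i then Finsupp.single γ (1 : ℂ)
     else if Equiv.swap i (i + 1) * γ ∈ weakInterval m σ ρ then
       Finsupp.single (Equiv.swap i (i + 1) * γ) (1 : ℂ)
     else 0)

/-- The projection `pr : B(σ, ρ) → B(σ, ρ')`. -/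
def prMap (m : ℕ) (σ ρ' : Equiv.Perm ℕ) :
    (Equiv.Perm ℕ →₀ ℂ) →ₗ[ℂ] (Equiv.Perm ℕ →₀ ℂ) :=
  Finsupp.lsum ℂ fun γ => LinearMap.toSpanSingleton ℂ (Equiv.Perm ℕ →₀ ℂ)
    (if γ ∈ weakInterval m σ ρ' then Finsupp.single γ (1 : ℂ) else 0)

/-- The linear map `ℂ·E → B(sfread(T_E), sfread(T'_E))`, `T ↦ sfread(T)`. -/
def thetaMap (lam : ℕ → ℕ) (m : ℕ) (TE : ℕ × ℕ → ℕ) :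
    ((ℕ × ℕ → ℕ) →₀ ℂ) →ₗ[ℂ] (Equiv.Perm ℕ →₀ ℂ) :=
  Finsupp.lsum ℂ fun T => LinearMap.toSpanSingleton ℂ (Equiv.Perm ℕ →₀ ℂ)
    (if IsIGLT lam m T ∧ TabEquiv lam TE T then
      Finsupp.single (sfread lam m TE T) (1 : ℂ) else 0)

/-! ### `itread`, `w₀` of parabolic subgroups and `𝒯^⊙_{α_E}` -/

/-- `σ` lies in the subgroup generated by `{s_j : j ∈ S}`. -/
def genBy (S : Set ℕ) (σ : Equiv.Perm ℕ) : Prop :=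
  ∃ w : List ℕ, (∀ j ∈ w, j ∈ S) ∧ wordProd w = σ

/-- The longest element of the parabolic subgroup of `S_m` generated by `{s_j : j ∈ S}`. -/
def longestIn (m : ℕ) (S : Set ℕ) : Equiv.Perm ℕ :=
  if h : ∃ σ, genBy S σ ∧ ∀ τ, genBy S τ → permLength m τ ≤ permLength m σ then h.choose
  else 1

/-- `set((α_E)_⊙) = {d_j : 1 ≤ j ≤ k, columns j and j+1 connected}`. -/
def odotSet (lam : ℕ → ℕ) (m : ℕ) (TE : ℕ × ℕ → ℕ) : Set ℕ :=
  {d | ∃ j, 1 ≤ j ∧ j ≤ numDesc lam m TE ∧ connAt lam m TE j ∧ d = dval lam m TE j}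

/-- `set(((α_E)_⊙)^c) = [1, m-1] \ set((α_E)_⊙)`. -/
def odotComplSet (lam : ℕ → ℕ) (m : ℕ) (TE : ℕ × ℕ → ℕ) : Set ℕ :=
  {i | 1 ≤ i ∧ i ≤ m - 1 ∧ i ∉ odotSet lam m TE}

/-- The reading word `itread(F)` of an SRT of shape `α_E`: entries from left to right,
starting with the bottom row and proceeding upwards. -/
def itreadList (lam : ℕ → ℕ) (m : ℕ) (TE : ℕ × ℕ → ℕ) (F : ℕ → ℕ → ℕ) : List ℕ :=
  let k := numDesc lam m TE
  let rmax : ℤ := (colLen lam m TE 1 : ℤ) - 1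
  let rmin : ℤ := topRowZ lam m TE (k + 1)
  ((List.range (rmax - rmin + 1).toNat).map fun t =>
    (List.range (k + 1)).filterMap fun j0 =>
      let j := j0 + 1
      let b : ℤ := (rmax - t) - topRowZ lam m TE j + 1
      if 1 ≤ b ∧ b ≤ (colLen lam m TE j : ℤ) then some (F j b.toNat) else none).flatten

/-- The one-line notation of `σ ∈ S_m`. -/
def oneLineList (m : ℕ) (σ : Equiv.Perm ℕ) : List ℕ :=
  (List.range m).map fun t => σ (t + 1)

section SourceAux

variable {n m : ℕ} {lam : ℕ → ℕ} {T : ℕ × ℕ → ℕ} {i : ℕ}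

lemma T_row_lt (hT : IsIGLT lam m T) {r c c' : ℕ} (hc : IsCell lam (r, c))
    (hc' : IsCell lam (r, c')) (h : c < c') : T (r, c) < T (r, c') := by
  induction c' with
  | zero => omega
  | succ d ih =>
    rcases Nat.lt_succ_iff_lt_or_eq.mp h with h' | h'
    · have hcd : IsCell lam (r, d) :=
        ⟨hc'.1, by have := hc.2.1; omega, le_trans (Nat.le_succ d) hc'.2.2⟩
      exact lt_trans (ih hcd h') (hT.2.2.1 r d hcd hc')
    · subst h'; exact hT.2.2.1 r c hc hc'

lemma rowSet_nonempty (hT : IsIGLT lam m T) (h1 : 1 ≤ i) (hmi : i ≤ m) :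
    (rowSet lam T i).Nonempty := by
  obtain ⟨⟨r, c⟩, hc, hv⟩ := hT.2.2.2.2 i h1 hmi
  exact ⟨r, c, hc, hv⟩

lemma rowSet_bddAbove (hlam : IsPartitionOf n lam) :
    BddAbove (rowSet lam T i) := by
  refine ⟨n, fun r hr => ?_⟩
  obtain ⟨c, hc, -⟩ := hr
  by_contra h
  have h0 := hlam.2.1 r (by omega)
  have h1 : 1 ≤ c := hc.2.1
  have h2 : c ≤ lam r := hc.2.2
  omega

lemma top_spec (hT : IsIGLT lam m T) (h1 : 1 ≤ i) (hmi : i ≤ m) :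
    IsCell lam (rtop lam T i, ctop lam T i) ∧ T (rtop lam T i, ctop lam T i) = i := by
  have hmem : rtop lam T i ∈ rowSet lam T i := Nat.sInf_mem (rowSet_nonempty hT h1 hmi)
  obtain ⟨c, hc, hv⟩ := hmem
  exact Nat.sInf_mem
    (⟨c, hc, hv⟩ : {c | IsCell lam (rtop lam T i, c) ∧ T (rtop lam T i, c) = i}.Nonempty)

lemma swap_apply {p : ℕ × ℕ} (hc : IsCell lam p) :
    swapTab lam i T p = if T p = i then i + 1 else if T p = i + 1 then i else T p :=
  if_pos hc

lemma swap_eq_i {p : ℕ × ℕ} (hc : IsCell lam p) :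
    swapTab lam i T p = i ↔ T p = i + 1 := by
  rw [swap_apply hc]; split_ifs <;> omega

lemma swap_eq_succ {p : ℕ × ℕ} (hc : IsCell lam p) :
    swapTab lam i T p = i + 1 ↔ T p = i := by
  rw [swap_apply hc]; split_ifs <;> omega

lemma rowSet_swap_i : rowSet lam (swapTab lam i T) i = rowSet lam T (i + 1) := by
  ext r
  constructor
  · rintro ⟨c, hc, hv⟩; exact ⟨c, hc, (swap_eq_i hc).mp hv⟩
  · rintro ⟨c, hc, hv⟩; exact ⟨c, hc, (swap_eq_i hc).mpr hv⟩

lemma rowSet_swap_succ : rowSet lam (swapTab lam i T) (i + 1) = rowSet lam T i := by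
  ext r
  constructor
  · rintro ⟨c, hc, hv⟩; exact ⟨c, hc, (swap_eq_succ hc).mp hv⟩
  · rintro ⟨c, hc, hv⟩; exact ⟨c, hc, (swap_eq_succ hc).mpr hv⟩

lemma swap_swap (hT : IsIGLT lam m T) : swapTab lam i (swapTab lam i T) = T := by
  funext p
  by_cases hc : IsCell lam p
  · rw [swap_apply hc, swap_apply hc]
    split_ifs <;> omega
  · show (if IsCell lam p then _ else 0) = T p
    rw [if_neg hc]
    exact (hT.1 p hc).symm

lemma adj_contra (hT : IsIGLT lam m T) (h1 : 1 ≤ i) (hmi : i + 1 ≤ m)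
    (hbox : ¬(IsCell lam (rtop lam T i, ctop lam T i + 1) ∧
        T (rtop lam T i, ctop lam T i + 1) = i + 1))
    {c c' : ℕ} (hc : IsCell lam (rtop lam T i, c)) (hc' : IsCell lam (rtop lam T i, c'))
    (hv : T (rtop lam T i, c) = i) (hv' : T (rtop lam T i, c') = i + 1) : False := by
  obtain ⟨hcell, hval⟩ := top_spec hT h1 (by omega)
  have hle : ctop lam T i ≤ c := Nat.sInf_le ⟨hc, hv⟩
  have heqc : ctop lam T i = c := by
    by_contra hne
    have := T_row_lt hT hcell hc (by omega)
    omega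
  have h1c : c < c' := by
    rcases lt_trichotomy c c' with h | h | h
    · exact h
    · subst h; omega
    · have := T_row_lt hT hc' hc h; omega
  have h2c : c' = c + 1 := by
    by_contra hne
    have hmid : IsCell lam (rtop lam T i, c + 1) :=
      ⟨hc.1, by omega, le_trans (by omega) hc'.2.2⟩
    have t1 := T_row_lt hT hc hmid (by omega)
    have t2 := T_row_lt hT hmid hc' (by omega)
    omega
  exact hbox ⟨by rw [heqc, ← h2c]; exact hc', by rw [heqc, ← h2c]; exact hv'⟩

lemma iglt_swap (hlam : IsPartitionOf n lam) (hT : IsIGLT lam m T)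
    (h1 : 1 ≤ i) (hmi : i + 1 ≤ m) (hnd : ¬ IsDescent lam T i)
    (hbox : ¬(IsCell lam (rtop lam T i, ctop lam T i + 1) ∧
        T (rtop lam T i, ctop lam T i + 1) = i + 1)) :
    IsIGLT lam m (swapTab lam i T) := by
  have hnd' : rbot lam T (i + 1) ≤ rtop lam T i := not_lt.mp hnd
  have noadj : ∀ r c c', IsCell lam (r, c) → IsCell lam (r, c') →
      T (r, c) = i → T (r, c') = i + 1 → False := by
    intro r c c' hc hc' hv hv'
    have e1 : rtop lam T i ≤ r := Nat.sInf_le ⟨c, hc, hv⟩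
    have e2 : r ≤ rbot lam T (i + 1) := le_csSup (rowSet_bddAbove hlam) ⟨c', hc', hv'⟩
    have her : r = rtop lam T i := by omega
    subst her
    exact adj_contra hT h1 hmi hbox hc hc' hv hv'
  refine ⟨fun p hp => if_neg hp, ?_, ?_, ?_, ?_⟩
  · intro p hp
    have hb := hT.2.1 p hp
    rw [swap_apply hp]
    split_ifs <;> omega
  · intro r c hc hc'
    have hlt := hT.2.2.1 r c hc hc'
    have hno : ¬ (T (r, c) = i ∧ T (r, c + 1) = i + 1) :=
      fun h => noadj r c (c + 1) hc hc' h.1 h.2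
    rw [swap_apply hc, swap_apply hc']
    split_ifs <;> omega
  · intro r c hc hc'
    have hlt := hT.2.2.2.1 r c hc hc'
    have hno : ¬ (T (r, c) = i ∧ T (r + 1, c) = i + 1) := by
      rintro ⟨h, h'⟩
      have e1 : rtop lam T i ≤ r := Nat.sInf_le ⟨c, hc, h⟩
      have e2 : r + 1 ≤ rbot lam T (i + 1) := le_csSup (rowSet_bddAbove hlam) ⟨c, hc', h'⟩
      omega
    rw [swap_apply hc, swap_apply hc']
    split_ifs <;> omega
  · intro k hk1 hkm
    by_cases hki : k = i
    · obtain ⟨p, hp, hv⟩ := hT.2.2.2.2 (i + 1) (by omega) hmi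
      exact ⟨p, hp, by rw [hki]; exact (swap_eq_i hp).mpr hv⟩
    · by_cases hki' : k = i + 1
      · obtain ⟨p, hp, hv⟩ := hT.2.2.2.2 i h1 (by omega)
        exact ⟨p, hp, by rw [hki']; exact (swap_eq_succ hp).mpr hv⟩
      · obtain ⟨p, hp, hv⟩ := hT.2.2.2.2 k hk1 hkm
        exact ⟨p, hp, by rw [swap_apply hp, hv, if_neg hki, if_neg hki']⟩

lemma descent_swap (hlam : IsPartitionOf n lam) (hT : IsIGLT lam m T)
    (h1 : 1 ≤ i) (hmi : i + 1 ≤ m) (hnd : ¬ IsDescent lam T i)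
    (hbox : ¬(IsCell lam (rtop lam T i, ctop lam T i + 1) ∧
        T (rtop lam T i, ctop lam T i + 1) = i + 1)) :
    IsDescent lam (swapTab lam i T) i := by
  have key : rtop lam T (i + 1) < rbot lam T i := by
    have hnd' : rbot lam T (i + 1) ≤ rtop lam T i := not_lt.mp hnd
    have m1 : rtop lam T (i + 1) ∈ rowSet lam T (i + 1) :=
      Nat.sInf_mem (rowSet_nonempty hT (by omega) hmi)
    have m2 : rbot lam T i ∈ rowSet lam T i :=
      Nat.sSup_mem (rowSet_nonempty hT h1 (by omega)) (rowSet_bddAbove hlam)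
    have e1 : rtop lam T (i + 1) ≤ rbot lam T (i + 1) := le_csSup (rowSet_bddAbove hlam) m1
    have e2 : rtop lam T i ≤ rbot lam T i := Nat.sInf_le m2
    by_contra hle
    push_neg at hle
    obtain ⟨c, hc, hv⟩ := m2
    obtain ⟨c', hc', hv'⟩ := m1
    have her : rbot lam T i = rtop lam T i := by omega
    have her' : rtop lam T (i + 1) = rtop lam T i := by omega
    rw [her] at hc hv
    rw [her'] at hc' hv'
    exact adj_contra hT h1 hmi hbox hc hc' hv hv'
  unfold IsDescent rtop rbot
  rw [rowSet_swap_i, rowSet_swap_succ]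
  exact key

lemma nonatt_swap (hlam : IsPartitionOf n lam) (hT : IsIGLT lam m T)
    (h1 : 1 ≤ i) (hmi : i + 1 ≤ m) (hnd : ¬ IsDescent lam T i)
    (hbox : ¬(IsCell lam (rtop lam T i, ctop lam T i + 1) ∧
        T (rtop lam T i, ctop lam T i + 1) = i + 1)) :
    ¬ IsAttacking lam (swapTab lam i T) i := by
  have hnd' : rbot lam T (i + 1) ≤ rtop lam T i := not_lt.mp hnd
  rintro ⟨-, hA | hB⟩
  · obtain ⟨r, c, hc, hc', hv, hv'⟩ := hA
    rw [swap_eq_i hc] at hv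
    rw [swap_eq_succ hc'] at hv'
    have := hT.2.2.2.1 r c hc hc'
    omega
  · obtain ⟨⟨r, c⟩, hp, hv, hle⟩ := hB
    rw [swap_eq_succ hp] at hv
    have hrbot_eq : rbot lam (swapTab lam i T) i = rbot lam T (i + 1) := by
      unfold rbot; rw [rowSet_swap_i]
    rw [hrbot_eq] at hle
    have e1 : rtop lam T i ≤ r := Nat.sInf_le ⟨c, hp, hv⟩
    have m2 : rbot lam T (i + 1) ∈ rowSet lam T (i + 1) :=
      Nat.sSup_mem (rowSet_nonempty hT (by omega) hmi) (rowSet_bddAbove hlam)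
    obtain ⟨c', hc', hv'⟩ := m2
    have her : r = rtop lam T i := by
      simp only at hle; omega
    have her' : rbot lam T (i + 1) = rtop lam T i := by
      simp only at hle; omega
    rw [her] at hp hv
    rw [her'] at hc' hv'
    exact adj_contra hT h1 hmi hbox hp hc' hv hv'

lemma swap_ne (hT : IsIGLT lam m T) (h1 : 1 ≤ i) (hmi : i + 1 ≤ m) :
    swapTab lam i T ≠ T := by
  obtain ⟨p, hp, hv⟩ := hT.2.2.2.2 i h1 (by omega)
  intro h
  have hcf := congrFun h p
  rw [swap_apply hp, if_pos hv] at hcf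
  omega

lemma piOp_single (lam : ℕ → ℕ) (i : ℕ) (T' : ℕ × ℕ → ℕ) :
    piOp lam i (Finsupp.single T' (1 : ℂ)) =
      (if ¬ IsDescent lam T' i then Finsupp.single T' (1 : ℂ)
       else if IsAttacking lam T' i then 0
       else Finsupp.single (swapTab lam i T') (1 : ℂ)) := by
  simp only [piOp, Finsupp.lsum_single, LinearMap.toSpanSingleton_apply, one_smul]

end SourceAux

/-- A tableau `T ∈ IGLT_m(λ)` is a source tableau if and only if for
every `1 ≤ i ≤ m-1` that is not a descent of `T`, the box immediately to the right of
`Top_i(T)` belongs to the Young diagram of `λ` and contains the entry `i+1`. -/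
theorem source_characterization (n m : ℕ) (hn : 0 < n) (hm : 0 < m) (hmn : m ≤ n)
    (lam : ℕ → ℕ) (hlam : IsPartitionOf n lam)
    (T : ℕ × ℕ → ℕ) (hT : IsIGLT lam m T) :
    IsSourceTab lam m T ↔
      ∀ i, 1 ≤ i → i ≤ m - 1 → ¬ IsDescent lam T i →
        IsCell lam (rtop lam T i, ctop lam T i + 1) ∧
          T (rtop lam T i, ctop lam T i + 1) = i + 1 := by
  constructor
  · intro hsrc i hi1 hi2 hnd
    by_contra hbox
    have hm' : i + 1 ≤ m := by omega
    refine absurd ⟨swapTab lam i T, i, iglt_swap hlam hT hi1 hm' hnd hbox,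
      swap_ne hT hi1 hm', hi1, hi2, ?_⟩ hsrc.2
    rw [piOp_single, if_neg (not_not.mpr (descent_swap hlam hT hi1 hm' hnd hbox)),
      if_neg (nonatt_swap hlam hT hi1 hm' hnd hbox), swap_swap hT]
  · intro hchar
    refine ⟨hT, ?_⟩
    rintro ⟨T', i, hT', hne, hi1, hi2, hpi⟩
    have hm' : i + 1 ≤ m := by omega
    rw [piOp_single] at hpi
    by_cases hd : IsDescent lam T' i
    swap
    · rw [if_pos hd] at hpi
      exact hne ((Finsupp.single_left_inj (one_ne_zero : (1:ℂ) ≠ 0)).mp hpi)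
    by_cases ha : IsAttacking lam T' i
    · rw [if_neg (not_not.mpr hd), if_pos ha] at hpi
      exact one_ne_zero (Finsupp.single_eq_zero.mp hpi.symm)
    · rw [if_neg (not_not.mpr hd), if_neg ha] at hpi
      have hTeq : swapTab lam i T' = T :=
        (Finsupp.single_left_inj (one_ne_zero : (1:ℂ) ≠ 0)).mp hpi
      subst hTeq
      -- facts about T'
      have hB : ∀ p : ℕ × ℕ, IsCell lam p → T' p = i + 1 → ¬ (p.1 ≤ rbot lam T' i) :=
        fun p hp hv hle => ha ⟨hd, Or.inr ⟨p, hp, hv, hle⟩⟩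
      have m1 : rtop lam T' (i + 1) ∈ rowSet lam T' (i + 1) :=
        Nat.sInf_mem (rowSet_nonempty hT' (by omega) hm')
      obtain ⟨c0, hc0, hv0⟩ := m1
      have hlt : rbot lam T' i < rtop lam T' (i + 1) := by
        have := hB (rtop lam T' (i + 1), c0) hc0 hv0
        simp only at this; omega
      have eq1 : rtop lam (swapTab lam i T') i = rtop lam T' (i + 1) := by
        unfold rtop; rw [rowSet_swap_i]
      have eq2 : rbot lam (swapTab lam i T') (i + 1) = rbot lam T' i := by
        unfold rbot; rw [rowSet_swap_succ]
      have hndT : ¬ IsDescent lam (swapTab lam i T') i := by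
        unfold IsDescent; rw [eq1, eq2]; omega
      obtain ⟨hcellR, hvalR⟩ := hchar i hi1 hi2 hndT
      obtain ⟨hcellT, hvalT⟩ := top_spec hT hi1 (by omega)
      have hvT' : T' (rtop lam (swapTab lam i T') i, ctop lam (swapTab lam i T') i)
          = i + 1 := (swap_eq_i hcellT).mp hvalT
      have hvR' : T' (rtop lam (swapTab lam i T') i, ctop lam (swapTab lam i T') i + 1)
          = i := (swap_eq_succ hcellR).mp hvalR
      have := hT'.2.2.1 _ _ hcellT hcellR
      omega

end Genomic
end
end

section
/- Let σ ⪯_L ρ in S_m and let ρ' ∈ [σ,ρ]_L. The ℂ-linear map pr : B(σ,ρ) → B(σ,ρ') defined on basis elements by pr(γ) = γ if γ ∈ [σ,ρ']_L and pr(γ) = 0 otherwise is surjective and satisfies pr(π_i(γ)) = π_i(pr(γ)) for all 1 ≤ i ≤ m−1 and all γ ∈ [σ,ρ]_L; that is, pr is a surjective H_m(0)-module homomorphism. -/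
open Classical

noncomputable section

namespace Genomic

lemma prMap_single (m : ℕ) (σ ρ' γ : Equiv.Perm ℕ) :
    prMap m σ ρ' (Finsupp.single γ (1 : ℂ)) =
      if γ ∈ weakInterval m σ ρ' then Finsupp.single γ (1 : ℂ) else 0 := by
  simp [prMap, LinearMap.toSpanSingleton_apply]

lemma piB_single (m : ℕ) (σ ρ : Equiv.Perm ℕ) (i : ℕ) (γ : Equiv.Perm ℕ) :
    piB m σ ρ i (Finsupp.single γ (1 : ℂ)) =
      (if DesL m γ i then Finsupp.single γ (1 : ℂ)
       else if Equiv.swap i (i + 1) * γ ∈ weakInterval m σ ρ then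
         Finsupp.single (Equiv.swap i (i + 1) * γ) (1 : ℂ)
       else 0) := by
  simp [piB, LinearMap.toSpanSingleton_apply]

lemma weakLe_trans {m : ℕ} {a b c : Equiv.Perm ℕ} (h1 : weakLe m a b) (h2 : weakLe m b c) :
    weakLe m a c := Relation.ReflTransGen.trans h1 h2

/-- Let `σ ⪯_L ρ` in `S_m` and let `ρ' ∈ [σ, ρ]_L`.  The `ℂ`-linear map
`pr : B(σ,ρ) → B(σ,ρ')` defined on basis elements by `pr(γ) = γ` if `γ ∈ [σ,ρ']_L` and
`pr(γ) = 0` otherwise is surjective and commutes with the operators `π_i` for all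
`1 ≤ i ≤ m-1`; that is, `pr` is a surjective `H_m(0)`-module homomorphism. -/
theorem pr_module_hom (m : ℕ) (hm : 0 < m)
    (σ ρ ρ' : Equiv.Perm ℕ) (hσ : InSymm m σ) (hρ : InSymm m ρ)
    (hσρ : weakLe m σ ρ) (hρ' : ρ' ∈ weakInterval m σ ρ) :
    (∀ y ∈ Submodule.span ℂ
        {f : Equiv.Perm ℕ →₀ ℂ | ∃ γ ∈ weakInterval m σ ρ', f = Finsupp.single γ (1 : ℂ)},
      ∃ x ∈ Submodule.span ℂ
        {f : Equiv.Perm ℕ →₀ ℂ | ∃ γ ∈ weakInterval m σ ρ, f = Finsupp.single γ (1 : ℂ)},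
        prMap m σ ρ' x = y) ∧
    (∀ i, 1 ≤ i → i ≤ m - 1 → ∀ γ ∈ weakInterval m σ ρ,
      prMap m σ ρ' (piB m σ ρ i (Finsupp.single γ (1 : ℂ))) =
        piB m σ ρ' i (prMap m σ ρ' (Finsupp.single γ (1 : ℂ)))) := by
  have hsub : weakInterval m σ ρ' ⊆ weakInterval m σ ρ := by
    intro γ hγ
    exact ⟨hγ.1, weakLe_trans hγ.2 hρ'.2⟩
  constructor
  · intro y hy
    refine ⟨y, ?_, ?_⟩
    · refine Submodule.span_mono ?_ hy
      rintro f ⟨γ, hγ, rfl⟩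
      exact ⟨γ, hsub hγ, rfl⟩
    · have heq : ∀ x ∈ Submodule.span ℂ
          {f : Equiv.Perm ℕ →₀ ℂ | ∃ γ ∈ weakInterval m σ ρ', f = Finsupp.single γ (1 : ℂ)},
          prMap m σ ρ' x = LinearMap.id (R := ℂ) x := by
        apply LinearMap.eqOn_span
        rintro f ⟨γ, hγ, rfl⟩
        simp [prMap_single, if_pos hγ]
      simpa using heq y hy
  · intro i h1 h2 γ hγ
    rw [piB_single, prMap_single]
    by_cases hd : DesL m γ i
    · rw [if_pos hd]
      by_cases hmem : γ ∈ weakInterval m σ ρ'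
      · rw [if_pos hmem, prMap_single, if_pos hmem, piB_single, if_pos hd]
      · rw [if_neg hmem, prMap_single, if_neg hmem, map_zero]
    · rw [if_neg hd]
      have hcov : weakLe m γ (Equiv.swap i (i + 1) * γ) :=
        Relation.ReflTransGen.single ⟨i, h1, h2, hd, rfl⟩
      by_cases hmem : γ ∈ weakInterval m σ ρ'
      · rw [if_pos hmem, piB_single, if_neg hd]
        by_cases hs' : Equiv.swap i (i + 1) * γ ∈ weakInterval m σ ρ'
        · rw [if_pos hs', if_pos (hsub hs'), prMap_single, if_pos hs']
        · rw [if_neg hs']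
          by_cases hs : Equiv.swap i (i + 1) * γ ∈ weakInterval m σ ρ
          · rw [if_pos hs, prMap_single, if_neg hs']
          · rw [if_neg hs, map_zero]
      · rw [if_neg hmem, map_zero]
        have hs' : Equiv.swap i (i + 1) * γ ∉ weakInterval m σ ρ' := by
          intro hc
          exact hmem ⟨hγ.1, weakLe_trans hcov hc.2⟩
        by_cases hs : Equiv.swap i (i + 1) * γ ∈ weakInterval m σ ρ
        · rw [if_pos hs, prMap_single, if_neg hs']
        · rw [if_neg hs, map_zero]

end Genomic
end
end
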